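/- arXiv:1407.1560 — 5 statements merged into one kernel-verified Lean document; each statement's English description precedes it below -/
import Mathlib

section
/- (Existence part of the extremal problem, Theorem 7.) Let 0 < r < 1 and r < s, t < 1/r. Set λ = (log t − log r)/(log s − log r) and μ = (log t + log r)/(log s + log r), and let K = max{λ, 1/λ, μ, 1/μ}. Then there exists a homeomorphism f of the closed annulus {z ∈ ℂ : r ≤ |z| ≤ 1/r} onto itself such that: f(z) = z whenever |z| = r or |z| = 1/r; |f(z)| = t whenever |z| = s; f is real-differentiable at every z with |z| ∉ {r, s, 1/r}; and at every such point ‖Df(z)‖² ≤ K · J(z,f). (The map may be taken to be a scaled radial power stretch on each of the two subannuli {r ≤ |z| ≤ s} and {s ≤ |z| ≤ 1/r}.) -/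
/-!
In logarithmic radial coordinates the map is piecewise affine: on `r ≤ |z| ≤ s` it is the radial
power stretch `z ↦ r (|z|/r)^λ z/|z|`, which fixes `|z| = r`, and on `s ≤ |z| ≤ 1/r` the stretch
`z ↦ r⁻¹ (r|z|)^μ z/|z|`, which fixes `|z| = 1/r`; `λ` and `μ` are exactly the exponents for
which both pieces send `|z| = s` to `|z| = t`, so they glue. A radial map `z ↦ φ(|z|) z/|z|`
stretches by `φ'(ρ)` along the ray and by `φ(ρ)/ρ` across it, so its distortion is
`max(ρφ'/φ, φ/(ρφ'))`, which for a power `ρ^α` is the constant `max(α, 1/α)`.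
-/

open Set Filter Topology

noncomputable section

def powerFixing (p α ρ : ℝ) : ℝ := p * (ρ / p) ^ α

def brokenPower (p q s α β ρ : ℝ) : ℝ :=
  if ρ ≤ s then powerFixing p α ρ else powerFixing q β ρ

def radialMap {E : Type*} [NormedAddCommGroup E] [NormedSpace ℝ E] (φ : ℝ → ℝ) (z : E) : E :=
  (φ ‖z‖ / ‖z‖) • z

/-- For a unit vector `u`, the self-adjoint map with eigenvalue `b` on `u` and `a` on `u⊥`. -/
def axialStretch {E : Type*} [NormedAddCommGroup E] [InnerProductSpace ℝ E] (u : E) (a b : ℝ) :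
    E →L[ℝ] E :=
  a • ContinuousLinearMap.id ℝ E + (b - a) • (innerSL ℝ u).smulRight u

end

section PowerFixing

variable {p α ρ : ℝ}

theorem powerFixing_self (hp : p ≠ 0) : powerFixing p α p = p := by
  rw [powerFixing, div_self hp, Real.one_rpow, mul_one]

theorem powerFixing_inv_apply (hp : 0 < p) (hα : α ≠ 0) (hρ : 0 ≤ ρ) :
    powerFixing p α⁻¹ (powerFixing p α ρ) = ρ := by
  rw [powerFixing, powerFixing, mul_div_cancel_left₀ _ hp.ne', ← Real.rpow_mul (by positivity),
    mul_inv_cancel₀ hα, Real.rpow_one, mul_div_cancel₀ _ hp.ne']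

theorem powerFixing_apply_of_mul_log_eq {s t : ℝ} (hp : 0 < p) (hs : 0 < s) (ht : 0 < t)
    (h : α * (Real.log s - Real.log p) = Real.log t - Real.log p) :
    powerFixing p α s = t := by
  rw [powerFixing, Real.rpow_def_of_pos (div_pos hs hp), Real.log_div hs.ne' hp.ne',
    mul_comm (_ - _), h, Real.exp_sub, Real.exp_log ht, Real.exp_log hp, mul_div_cancel₀ _ hp.ne']

theorem strictMonoOn_powerFixing (hp : 0 < p) (hα : 0 < α) :
    StrictMonoOn (powerFixing p α) (Ici 0) := fun _ hx _ _ hxy =>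
  mul_lt_mul_of_pos_left (Real.rpow_lt_rpow (div_nonneg hx hp.le)
    (div_lt_div_of_pos_right hxy hp) hα) hp

theorem continuous_powerFixing (hα : 0 ≤ α) : Continuous (powerFixing p α) :=
  continuous_const.mul ((continuous_id.div_const p).rpow_const fun _ => Or.inr hα)

theorem hasDerivAt_powerFixing (hp : 0 < p) (hρ : 0 < ρ) :
    HasDerivAt (powerFixing p α) (α * (ρ / p) ^ (α - 1)) ρ := by
  have := (((hasDerivAt_id ρ).div_const p).rpow_const
    (Or.inl (div_pos hρ hp).ne') (p := α)).const_mul p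
  refine this.congr_deriv ?_
  simp only [id]
  field_simp

theorem powerFixing_div_self (hp : 0 < p) (hρ : 0 < ρ) :
    powerFixing p α ρ / ρ = (ρ / p) ^ (α - 1) := by
  rw [Real.rpow_sub_one (div_pos hρ hp).ne', powerFixing]
  field_simp

end PowerFixing

section BrokenPower

variable {p q s t α β ρ : ℝ}

theorem brokenPower_of_le (h : ρ ≤ s) : brokenPower p q s α β ρ = powerFixing p α ρ := if_pos h

theorem brokenPower_of_lt (h : s < ρ) : brokenPower p q s α β ρ = powerFixing q β ρ :=
  if_neg h.not_ge

theorem brokenPower_eventuallyEq_of_lt (h : ρ < s) :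
    brokenPower p q s α β =ᶠ[𝓝 ρ] powerFixing p α :=
  (eventually_lt_nhds h).mono fun _ hx => brokenPower_of_le hx.le

theorem brokenPower_eventuallyEq_of_gt (h : s < ρ) :
    brokenPower p q s α β =ᶠ[𝓝 ρ] powerFixing q β :=
  (eventually_gt_nhds h).mono fun _ hx => brokenPower_of_lt hx

theorem continuous_brokenPower (hα : 0 ≤ α) (hβ : 0 ≤ β)
    (h : powerFixing p α s = powerFixing q β s) : Continuous (brokenPower p q s α β) :=
  (continuous_powerFixing hα).if_le (continuous_powerFixing hβ) continuous_id continuous_const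
    fun _ hx => hx ▸ h

theorem mapsTo_brokenPower (hp : 0 < p) (hq : 0 < q) (hα : 0 < α) (hβ : 0 < β)
    (hps : powerFixing p α s = t) (hqs : powerFixing q β s = t) (hs : 0 < s) (hpt : p ≤ t)
    (htq : t ≤ q) :
    MapsTo (brokenPower p q s α β) (Icc p q) (Icc p q) := by
  rintro ρ ⟨hpρ, hρq⟩
  have hρ : 0 ≤ ρ := hp.le.trans hpρ
  rcases le_or_gt ρ s with hρs | hsρ
  · have hmono := (strictMonoOn_powerFixing hp hα).monotoneOn
    rw [brokenPower_of_le hρs]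
    refine ⟨?_, ?_⟩
    · simpa only [powerFixing_self hp.ne'] using hmono (mem_Ici.2 hp.le) hρ hpρ
    · exact (hmono hρ (mem_Ici.2 hs.le) hρs).trans (hps ▸ htq)
  · have hmono := (strictMonoOn_powerFixing hq hβ).monotoneOn
    rw [brokenPower_of_lt hsρ]
    refine ⟨?_, ?_⟩
    · exact hpt.trans (hqs ▸ hmono (mem_Ici.2 hs.le) hρ hsρ.le)
    · simpa only [powerFixing_self hq.ne'] using hmono hρ (mem_Ici.2 hq.le) hρq

theorem brokenPower_inv_apply (hp : 0 < p) (hq : 0 < q) (hα : 0 < α) (hβ : 0 < β)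
    (hps : powerFixing p α s = t) (hqs : powerFixing q β s = t) (hs : 0 < s) (hρ : 0 < ρ) :
    brokenPower p q t α⁻¹ β⁻¹ (brokenPower p q s α β ρ) = ρ := by
  rcases le_or_gt ρ s with hρs | hsρ
  · have : powerFixing p α ρ ≤ t :=
      hps ▸ (strictMonoOn_powerFixing hp hα).monotoneOn hρ.le (mem_Ici.2 hs.le) hρs
    rw [brokenPower_of_le hρs, brokenPower_of_le this, powerFixing_inv_apply hp hα.ne' hρ.le]
  · have : t < powerFixing q β ρ :=
      hqs ▸ strictMonoOn_powerFixing hq hβ (mem_Ici.2 hs.le) (mem_Ici.2 hρ.le) hsρ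
    rw [brokenPower_of_lt hsρ, brokenPower_of_lt this, powerFixing_inv_apply hq hβ.ne' hρ.le]

theorem invOn_brokenPower (hp : 0 < p) (hq : 0 < q) (hα : 0 < α) (hβ : 0 < β)
    (hps : powerFixing p α s = t) (hqs : powerFixing q β s = t) (hs : 0 < s) :
    InvOn (brokenPower p q t α⁻¹ β⁻¹) (brokenPower p q s α β) (Ioi 0) (Ioi 0) := by
  have hpt : powerFixing p α⁻¹ t = s := hps ▸ powerFixing_inv_apply hp hα.ne' hs.le
  have hqt : powerFixing q β⁻¹ t = s := hqs ▸ powerFixing_inv_apply hq hβ.ne' hs.le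
  have ht : 0 < t := hps ▸ mul_pos hp (Real.rpow_pos_of_pos (div_pos hs hp) α)
  refine ⟨fun ρ hρ => brokenPower_inv_apply hp hq hα hβ hps hqs hs hρ, fun τ hτ => ?_⟩
  simpa only [inv_inv] using
    brokenPower_inv_apply hp hq (inv_pos.2 hα) (inv_pos.2 hβ) hpt hqt ht hτ

end BrokenPower

section RadialMap

variable {E : Type*} [NormedAddCommGroup E] [NormedSpace ℝ E] {φ ψ : ℝ → ℝ} {z : E}

theorem norm_radialMap (hz : z ≠ 0) (hφ : 0 ≤ φ ‖z‖) : ‖radialMap φ z‖ = φ ‖z‖ := by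
  rw [radialMap, norm_smul, Real.norm_eq_abs, abs_div, abs_of_nonneg hφ, abs_norm,
    div_mul_cancel₀ _ (norm_ne_zero_iff.2 hz)]

theorem radialMap_eq_self (h : φ ‖z‖ = ‖z‖) : radialMap φ z = z := by
  rcases eq_or_ne z 0 with rfl | hz
  · simp [radialMap]
  · rw [radialMap, h, div_self (norm_ne_zero_iff.2 hz), one_smul]

theorem radialMap_radialMap (hz : z ≠ 0) (hφ : 0 < φ ‖z‖) :
    radialMap ψ (radialMap φ z) = radialMap (ψ ∘ φ) z := by
  have hz' : ‖z‖ ≠ 0 := norm_ne_zero_iff.2 hz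
  rw [radialMap, norm_radialMap hz hφ.le, radialMap, radialMap, smul_smul, Function.comp_apply]
  congr 1
  field_simp

theorem radialMap_eventuallyEq (h : φ =ᶠ[𝓝 ‖z‖] ψ) : radialMap φ =ᶠ[𝓝 z] radialMap ψ :=
  (continuous_norm.continuousAt.eventually h).mono fun w hw => by simp only [radialMap, hw]

theorem continuousOn_radialMap (hφ : Continuous φ) : ContinuousOn (radialMap (E := E) φ) {0}ᶜ :=
  fun _ hz => (((hφ.comp continuous_norm).continuousAt.div continuous_norm.continuousAt
    (norm_ne_zero_iff.2 hz)).smul continuousAt_id).continuousWithinAt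

variable {a b a' b' : ℝ}

theorem mapsTo_radialMap (ha : 0 < a) (ha' : 0 ≤ a') (h : MapsTo φ (Icc a b) (Icc a' b')) :
    MapsTo (radialMap φ) ((‖·‖) ⁻¹' Icc a b : Set E) ((‖·‖) ⁻¹' Icc a' b') := fun z hz => by
  have hφ := h hz
  rwa [mem_preimage, norm_radialMap (norm_pos_iff.1 (ha.trans_le hz.1)) (ha'.trans hφ.1)]

theorem leftInvOn_radialMap (ha : 0 < a) (ha' : 0 < a') (hφ : MapsTo φ (Icc a b) (Icc a' b'))
    (h : LeftInvOn ψ φ (Icc a b)) :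
    LeftInvOn (radialMap ψ) (radialMap φ) ((‖·‖) ⁻¹' Icc a b : Set E) := fun z hz => by
  rw [radialMap_radialMap (norm_pos_iff.1 (ha.trans_le hz.1)) (ha'.trans_le (hφ hz).1)]
  exact radialMap_eq_self (h hz)

end RadialMap

theorem bijOn_continuousOn_invOn_radialMap_brokenPower {E : Type*} [NormedAddCommGroup E]
    [NormedSpace ℝ E] {p q s t α β : ℝ} (hp : 0 < p) (hα : 0 < α) (hβ : 0 < β)
    (hps : powerFixing p α s = t) (hqs : powerFixing q β s = t) (hpt : p ≤ t) (htq : t ≤ q)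
    (hpsl : p ≤ s) (hsq : s ≤ q) :
    let A : Set E := (‖·‖) ⁻¹' Icc p q
    BijOn (radialMap (brokenPower p q s α β)) A A ∧
      ContinuousOn (radialMap (brokenPower p q s α β)) A ∧
      ContinuousOn (radialMap (brokenPower p q t α⁻¹ β⁻¹)) A ∧
      InvOn (radialMap (brokenPower p q t α⁻¹ β⁻¹)) (radialMap (brokenPower p q s α β)) A A := by
  intro A
  have hs : 0 < s := hp.trans_le hpsl
  have hq : 0 < q := hs.trans_le hsq
  have hpt' : powerFixing p α⁻¹ t = s := hps ▸ powerFixing_inv_apply hp hα.ne' hs.le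
  have hqt' : powerFixing q β⁻¹ t = s := hqs ▸ powerFixing_inv_apply hq hβ.ne' hs.le
  have hφ := mapsTo_brokenPower hp hq hα hβ hps hqs hs hpt htq
  have hψ := mapsTo_brokenPower hp hq (inv_pos.2 hα) (inv_pos.2 hβ) hpt' hqt'
    (hp.trans_le hpt) hpsl hsq
  have hinv : InvOn _ _ (Icc p q) (Icc p q) := (invOn_brokenPower hp hq hα hβ hps hqs hs).mono
    (fun _ hx => hp.trans_le hx.1) (fun _ hx => hp.trans_le hx.1)
  have hA : InvOn (radialMap (brokenPower p q t α⁻¹ β⁻¹)) (radialMap (brokenPower p q s α β)) A A :=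
    ⟨leftInvOn_radialMap hp hp hφ hinv.1, leftInvOn_radialMap hp hp hψ hinv.2⟩
  have hA0 : A ⊆ {0}ᶜ := fun z hz => norm_pos_iff.1 (hp.trans_le hz.1)
  exact ⟨hA.bijOn (mapsTo_radialMap hp hp.le hφ) (mapsTo_radialMap hp hp.le hψ),
    (continuousOn_radialMap
      (continuous_brokenPower hα.le hβ.le (hps.trans hqs.symm))).mono hA0,
    (continuousOn_radialMap (continuous_brokenPower (inv_pos.2 hα).le (inv_pos.2 hβ).le
      (hpt'.trans hqt'.symm))).mono hA0, hA⟩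

section AxialStretch

variable {E : Type*} [NormedAddCommGroup E] [InnerProductSpace ℝ E] {u : E} {a b : ℝ}

theorem axialStretch_apply (h : E) :
    axialStretch u a b h = a • h + ((b - a) * inner ℝ u h) • u := by
  simp [axialStretch, smul_smul]

theorem norm_axialStretch_apply_sq (hu : ‖u‖ = 1) (h : E) :
    ‖axialStretch u a b h‖ ^ 2 = a ^ 2 * ‖h‖ ^ 2 + (b ^ 2 - a ^ 2) * inner ℝ u h ^ 2 := by
  rw [axialStretch_apply, norm_add_sq_real, norm_smul, norm_smul, inner_smul_left,
    inner_smul_right, real_inner_comm, hu, Real.norm_eq_abs, Real.norm_eq_abs, mul_pow, mul_pow,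
    sq_abs, sq_abs]
  simp only [conj_trivial]
  ring

theorem norm_axialStretch_le (hu : ‖u‖ = 1) : ‖axialStretch u a b‖ ≤ max |a| |b| := by
  refine ContinuousLinearMap.opNorm_le_bound _ (le_max_of_le_left (abs_nonneg a)) fun h => ?_
  have hCS : inner ℝ u h ^ 2 ≤ ‖h‖ ^ 2 := by
    simpa [hu] using sq_le_sq' (neg_le_of_abs_le (abs_real_inner_le_norm u h))
      (le_of_abs_le (abs_real_inner_le_norm u h))
  refine le_of_sq_le_sq ?_ (by positivity)
  rw [norm_axialStretch_apply_sq hu, mul_pow]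
  rcases le_total |a| |b| with hab | hba
  · rw [max_eq_right hab, sq_abs]
    nlinarith [sq_le_sq.2 hab, sq_nonneg (inner ℝ u h)]
  · rw [max_eq_left hba, sq_abs]
    nlinarith [sq_le_sq.2 hba, sq_nonneg (inner ℝ u h)]

theorem det_axialStretch {u : ℂ} (hu : ‖u‖ = 1) :
    LinearMap.det (axialStretch u a b : ℂ →ₗ[ℝ] ℂ) = a * b := by
  have hu' : u.re * u.re + u.im * u.im = 1 := by
    rw [← Complex.normSq_apply, Complex.normSq_eq_norm_sq, hu, one_pow]
  rw [← LinearMap.det_toMatrix Complex.basisOneI, Matrix.det_fin_two]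
  simp [LinearMap.toMatrix_apply, axialStretch_apply, Complex.inner]
  linear_combination (a * b - a * a) * hu'

theorem sq_norm_axialStretch_le_mul_det {u : ℂ} (hu : ‖u‖ = 1) (ha : 0 < a) (hb : 0 < b) :
    ‖axialStretch u a b‖ ^ 2 ≤
      max (b / a) (a / b) * LinearMap.det (axialStretch u a b : ℂ →ₗ[ℝ] ℂ) := by
  rw [det_axialStretch hu]
  have hmax : max |a| |b| ^ 2 ≤ max (b / a) (a / b) * (a * b) := by
    rw [abs_of_pos ha, abs_of_pos hb]
    rcases le_total a b with hab | hba
    · rw [max_eq_right hab]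
      calc b ^ 2 = b / a * (a * b) := by field_simp
        _ ≤ _ := by gcongr; exact le_max_left _ _
    · rw [max_eq_left hba]
      calc a ^ 2 = a / b * (a * b) := by field_simp
        _ ≤ _ := by gcongr; exact le_max_right _ _
  exact (pow_le_pow_left₀ (norm_nonneg _) (norm_axialStretch_le hu) 2).trans hmax

theorem hasFDerivAt_norm {x : E} (hx : x ≠ 0) :
    HasFDerivAt (‖·‖) (‖x‖⁻¹ • innerSL ℝ x) x := by
  have := ((hasStrictFDerivAt_norm_sq x).hasFDerivAt.sqrt (by positivity))
  simp only [Real.sqrt_sq (norm_nonneg _)] at this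
  refine this.congr_fderiv ?_
  ext h
  simp
  field_simp

theorem hasFDerivAt_radialMap {φ : ℝ → ℝ} {φ' : ℝ} {z : E} (hz : z ≠ 0)
    (hφ : HasDerivAt φ φ' ‖z‖) :
    HasFDerivAt (radialMap φ) (axialStretch (‖z‖⁻¹ • z) (φ ‖z‖ / ‖z‖) φ') z := by
  have hρ : ‖z‖ ≠ 0 := norm_ne_zero_iff.2 hz
  have hscale := (hφ.div (hasDerivAt_id ‖z‖) hρ).comp_hasFDerivAt z (hasFDerivAt_norm hz)
  refine (hscale.smul (hasFDerivAt_id z)).congr_fderiv ?_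
  ext h
  simp [axialStretch_apply, real_inner_smul_left, smul_smul]
  congr 1
  field_simp

end AxialStretch

theorem exists_hasFDerivAt_radialMap_powerFixing {p α K : ℝ} (hp : 0 < p) (hα : 0 < α)
    (hK : max α α⁻¹ ≤ K) {z : ℂ} (hz : z ≠ 0) :
    ∃ D : ℂ →L[ℝ] ℂ, HasFDerivAt (radialMap (powerFixing p α)) D z ∧
      ‖D‖ ^ 2 ≤ K * LinearMap.det (D : ℂ →ₗ[ℝ] ℂ) := by
  have hρ : 0 < ‖z‖ := norm_pos_iff.2 hz
  have hu : ‖‖z‖⁻¹ • z‖ = 1 := norm_smul_inv_norm hz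
  have hc : 0 < (‖z‖ / p) ^ (α - 1) := Real.rpow_pos_of_pos (div_pos hρ hp) _
  have hD := hasFDerivAt_radialMap hz (hasDerivAt_powerFixing hp hρ (α := α))
  rw [powerFixing_div_self hp hρ] at hD
  refine ⟨_, hD, ?_⟩
  have hratio := sq_norm_axialStretch_le_mul_det hu hc (mul_pos hα hc)
  rw [mul_div_cancel_right₀ _ hc.ne', div_mul_cancel_right₀ hc.ne'] at hratio
  refine hratio.trans (mul_le_mul_of_nonneg_right hK ?_)
  rw [det_axialStretch hu]
  positivity

theorem exists_hasFDerivAt_radialMap_brokenPower {p q s α β K : ℝ} (hp : 0 < p) (hq : 0 < q)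
    (hα : 0 < α) (hβ : 0 < β) (hK : max (max α α⁻¹) (max β β⁻¹) ≤ K) {z : ℂ} (hz : z ≠ 0)
    (hzs : ‖z‖ ≠ s) :
    ∃ D : ℂ →L[ℝ] ℂ, HasFDerivAt (radialMap (brokenPower p q s α β)) D z ∧
      ‖D‖ ^ 2 ≤ K * LinearMap.det (D : ℂ →ₗ[ℝ] ℂ) := by
  rcases hzs.lt_or_gt with h | h
  · obtain ⟨D, hD, hDK⟩ :=
      exists_hasFDerivAt_radialMap_powerFixing hp hα ((le_max_left _ _).trans hK) hz
    exact ⟨D, hD.congr_of_eventuallyEq (radialMap_eventuallyEq (brokenPower_eventuallyEq_of_lt h)),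
      hDK⟩
  · obtain ⟨D, hD, hDK⟩ :=
      exists_hasFDerivAt_radialMap_powerFixing hq hβ ((le_max_right _ _).trans hK) hz
    exact ⟨D, hD.congr_of_eventuallyEq (radialMap_eventuallyEq (brokenPower_eventuallyEq_of_gt h)),
      hDK⟩

theorem stmt_2_general (r s t : ℝ) (hr0 : 0 < r)
    (hs : r < s) (hs' : s < 1 / r) (ht : r < t) (ht' : t < 1 / r)
    (lam mu K : ℝ)
    (hlam : lam = (Real.log t - Real.log r) / (Real.log s - Real.log r))
    (hmu : mu = (Real.log t + Real.log r) / (Real.log s + Real.log r))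
    (hK : K = max (max lam (1 / lam)) (max mu (1 / mu))) :
    ∃ f g : ℂ → ℂ,
      Set.BijOn f {z : ℂ | r ≤ ‖z‖ ∧ ‖z‖ ≤ 1 / r}
        {z : ℂ | r ≤ ‖z‖ ∧ ‖z‖ ≤ 1 / r} ∧
      ContinuousOn f {z : ℂ | r ≤ ‖z‖ ∧ ‖z‖ ≤ 1 / r} ∧
      ContinuousOn g {z : ℂ | r ≤ ‖z‖ ∧ ‖z‖ ≤ 1 / r} ∧
      Set.InvOn g f {z : ℂ | r ≤ ‖z‖ ∧ ‖z‖ ≤ 1 / r}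
        {z : ℂ | r ≤ ‖z‖ ∧ ‖z‖ ≤ 1 / r} ∧
      (∀ z : ℂ, ‖z‖ = r ∨ ‖z‖ = 1 / r → f z = z) ∧
      (∀ z : ℂ, ‖z‖ = s → ‖f z‖ = t) ∧
      (∀ z : ℂ, r < ‖z‖ → ‖z‖ < 1 / r → ‖z‖ ≠ s →
        ∃ D : ℂ →L[ℝ] ℂ, HasFDerivAt f D z ∧
          ‖D‖ ^ 2 ≤ K * LinearMap.det (D : ℂ →ₗ[ℝ] ℂ)) := by
  have hs0 : 0 < s := hr0.trans hs
  have ht0 : 0 < t := hr0.trans ht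
  have hR : 0 < 1 / r := by positivity
  have hmu' : mu = (Real.log t - Real.log (1 / r)) / (Real.log s - Real.log (1 / r)) := by
    rw [hmu, one_div, Real.log_inv, sub_neg_eq_add, sub_neg_eq_add]
  have hlogs : 0 < Real.log s - Real.log r := sub_pos.2 (Real.log_lt_log hr0 hs)
  have hlogs' : Real.log s - Real.log (1 / r) < 0 := sub_neg.2 (Real.log_lt_log hs0 hs')
  have hlam0 : 0 < lam := hlam ▸ div_pos (sub_pos.2 (Real.log_lt_log hr0 ht)) hlogs
  have hmu0 : 0 < mu :=
    hmu' ▸ div_pos_of_neg_of_neg (sub_neg.2 (Real.log_lt_log ht0 ht')) hlogs'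
  have hst₁ : powerFixing r lam s = t :=
    powerFixing_apply_of_mul_log_eq hr0 hs0 ht0 (hlam ▸ div_mul_cancel₀ _ hlogs.ne')
  have hst₂ : powerFixing (1 / r) mu s = t :=
    powerFixing_apply_of_mul_log_eq hR hs0 ht0 (hmu' ▸ div_mul_cancel₀ _ hlogs'.ne)
  obtain ⟨hbij, hf, hg, hinv⟩ := bijOn_continuousOn_invOn_radialMap_brokenPower (E := ℂ)
    hr0 hlam0 hmu0 hst₁ hst₂ ht.le ht'.le hs.le hs'.le
  refine ⟨_, _, hbij, hf, hg, hinv, ?_, fun z hz => ?_, fun z hrz _ hzs => ?_⟩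
  · rintro z (hz | hz) <;> apply radialMap_eq_self
    · rw [hz, brokenPower_of_le hs.le, powerFixing_self hr0.ne']
    · rw [hz, brokenPower_of_lt hs', powerFixing_self hR.ne']
  · have hφs : brokenPower r (1 / r) s lam mu ‖z‖ = t := by rw [hz, brokenPower_of_le le_rfl, hst₁]
    rw [norm_radialMap (norm_pos_iff.1 (hz ▸ hs0)) (hφs ▸ ht0.le), hφs]
  · exact exists_hasFDerivAt_radialMap_brokenPower hr0 hR hlam0 hmu0
      (by rw [hK, one_div, one_div]) (norm_pos_iff.1 (hr0.trans hrz)) hzs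

/-- existence part of Theorem 7: For `0 < r < 1` and `r < s, t < 1/r`,
with `λ = (log t − log r)/(log s − log r)`, `μ = (log t + log r)/(log s + log r)` and
`K = max{λ, 1/λ, μ, 1/μ}`, there is a homeomorphism `f` of the closed annulus
`{r ≤ |z| ≤ 1/r}` onto itself which is the identity on the boundary circles, takes
the circle `{|z| = s}` to the circle `{|z| = t}`, is real-differentiable at every
point of the open annulus off the circle `{|z| = s}`, and satisfies the distortion
inequality `‖Df(z)‖² ≤ K·J(z,f)` at every such point. -/
theorem stmt_2 (r s t : ℝ) (hr0 : 0 < r) (hr1 : r < 1)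
    (hs : r < s) (hs' : s < 1 / r) (ht : r < t) (ht' : t < 1 / r)
    (lam mu K : ℝ)
    (hlam : lam = (Real.log t - Real.log r) / (Real.log s - Real.log r))
    (hmu : mu = (Real.log t + Real.log r) / (Real.log s + Real.log r))
    (hK : K = max (max lam (1 / lam)) (max mu (1 / mu))) :
    ∃ f g : ℂ → ℂ,
      Set.BijOn f {z : ℂ | r ≤ ‖z‖ ∧ ‖z‖ ≤ 1 / r}
        {z : ℂ | r ≤ ‖z‖ ∧ ‖z‖ ≤ 1 / r} ∧
      ContinuousOn f {z : ℂ | r ≤ ‖z‖ ∧ ‖z‖ ≤ 1 / r} ∧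
      ContinuousOn g {z : ℂ | r ≤ ‖z‖ ∧ ‖z‖ ≤ 1 / r} ∧
      Set.InvOn g f {z : ℂ | r ≤ ‖z‖ ∧ ‖z‖ ≤ 1 / r}
        {z : ℂ | r ≤ ‖z‖ ∧ ‖z‖ ≤ 1 / r} ∧
      (∀ z : ℂ, ‖z‖ = r ∨ ‖z‖ = 1 / r → f z = z) ∧
      (∀ z : ℂ, ‖z‖ = s → ‖f z‖ = t) ∧
      (∀ z : ℂ, r < ‖z‖ → ‖z‖ < 1 / r → ‖z‖ ≠ s →
        ∃ D : ℂ →L[ℝ] ℂ, HasFDerivAt f D z ∧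
          ‖D‖ ^ 2 ≤ K * LinearMap.det (D : ℂ →ₗ[ℝ] ℂ)) :=
  stmt_2_general r s t hr0 hs hs' ht ht' lam mu K hlam hmu hK
end

section
/- (Extremality of the logarithmic potential for the annulus.) Let 0 < r < R and let v : ℂ → ℝ be continuous on the closed annulus {r ≤ |z| ≤ R}, continuously differentiable on the open annulus A(r,R), with v = −1 on the circle {|z| = r} and v = +1 on the circle {|z| = R}. Then ∫_{A(r,R)} ‖∇v(z)‖² dA(z) ≥ 8π/log(R/r), i.e. the Dirichlet energy of v is at least that of the extremal function u(z) = 2·log(|z|/r)/log(R/r) − 1. -/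
/-!
Along every ray `ρ ↦ ρ e` with `‖e‖ = 1`, the function `v` rises from `-1` to `1`, so
`2 ≤ ∫ |∂ρ v| dρ ≤ (∫ ρ (∂ρ v)² dρ)^{1/2} (∫ dρ/ρ)^{1/2}` by the fundamental theorem of calculus and
Cauchy–Schwarz, i.e. `∫_r^R ρ ‖∇v(ρ e)‖² dρ ≥ 4 / log (R / r)`. Integrating over the direction
`e = exp (i θ)`, `θ ∈ (-π, π)`, in polar coordinates gives `8π / log (R / r)`.
-/

open MeasureTheory Set Real
open scoped ENNReal

theorem ENNReal.sq_lintegral_mul_le_mul_lintegral_sq {α : Type*} [MeasurableSpace α]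
    {μ : Measure α} {f g : α → ℝ≥0∞} (hf : AEMeasurable f μ) (hg : AEMeasurable g μ) :
    (∫⁻ x, f x * g x ∂μ) ^ 2 ≤ (∫⁻ x, f x ^ 2 ∂μ) * ∫⁻ x, g x ^ 2 ∂μ := by
  have hpq : (2 : ℝ).HolderConjugate 2 := Real.HolderConjugate.two_two
  have key := ENNReal.lintegral_mul_le_Lp_mul_Lq μ hpq hf hg
  simp only [ENNReal.rpow_two] at key
  calc (∫⁻ x, f x * g x ∂μ) ^ 2
      ≤ ((∫⁻ x, f x ^ 2 ∂μ) ^ (1 / 2 : ℝ) * (∫⁻ x, g x ^ 2 ∂μ) ^ (1 / 2 : ℝ)) ^ 2 := by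
        gcongr; exact key
    _ = (∫⁻ x, f x ^ 2 ∂μ) * ∫⁻ x, g x ^ 2 ∂μ := by
        rw [mul_pow, ← ENNReal.rpow_natCast, ← ENNReal.rpow_natCast, ← ENNReal.rpow_mul,
          ← ENNReal.rpow_mul]
        norm_num

theorem lintegral_Ioo_ofReal_inv {a b : ℝ} (ha : 0 < a) (hab : a ≤ b) :
    ∫⁻ x in Ioo a b, ENNReal.ofReal x⁻¹ = ENNReal.ofReal (log (b / a)) := by
  have hint : IntegrableOn (fun x : ℝ => x⁻¹) (Ioc a b) :=
    (continuousOn_inv₀.mono fun x hx => (ha.trans_le hx.1).ne').integrableOn_compact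
      isCompact_Icc |>.mono_set Ioc_subset_Icc_self
  rw [setLIntegral_congr Ioo_ae_eq_Ioc, ← ofReal_integral_eq_lintegral_ofReal hint
    (ae_restrict_of_forall_mem measurableSet_Ioc fun x hx => inv_nonneg.2 (ha.trans hx.1).le),
    ← intervalIntegral.integral_of_le hab, integral_inv_of_pos ha (ha.trans_le hab)]

theorem sq_lintegral_abs_le_lintegral_mul_sq_mul_log {g : ℝ → ℝ} (hg : Measurable g)
    {a b : ℝ} (ha : 0 < a) (hab : a ≤ b) :
    (∫⁻ x in Ioo a b, ENNReal.ofReal |g x|) ^ 2 ≤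
      (∫⁻ x in Ioo a b, ENNReal.ofReal (x * g x ^ 2)) * ENNReal.ofReal (log (b / a)) := by
  -- Cauchy–Schwarz for `|g| = (√x |g|) · (√x)⁻¹`.
  have hCS := ENNReal.sq_lintegral_mul_le_mul_lintegral_sq
    (μ := volume.restrict (Ioo a b))
    (by fun_prop : AEMeasurable (fun x => ENNReal.ofReal (√x * |g x|)) _)
    (by fun_prop : AEMeasurable (fun x => ENNReal.ofReal (√x)⁻¹) _)
  rw [← lintegral_Ioo_ofReal_inv ha hab]
  convert hCS using 2 <;> refine setLIntegral_congr_fun measurableSet_Ioo fun x hx => ?_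
  · have hx : 0 < x := ha.trans hx.1
    rw [← ENNReal.ofReal_mul (by positivity), mul_right_comm, mul_inv_cancel₀ (by positivity),
      one_mul]
  · rw [← ENNReal.ofReal_pow (by positivity), mul_pow, sq_abs, sq_sqrt (ha.trans hx.1).le]
  · rw [← ENNReal.ofReal_pow (by positivity), inv_pow, sq_sqrt (ha.trans hx.1).le]

theorem ofReal_abs_sub_le_lintegral_abs_deriv {φ : ℝ → ℝ} {a b : ℝ} (hab : a ≤ b)
    (hc : ContinuousOn φ (Icc a b)) (hd : ∀ x ∈ Ioo a b, DifferentiableAt ℝ φ x) :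
    ENNReal.ofReal |φ b - φ a| ≤ ∫⁻ x in Ioo a b, ENNReal.ofReal |deriv φ x| := by
  by_cases hfin : ∫⁻ x in Ioo a b, ENNReal.ofReal |deriv φ x| = ∞
  · simp [hfin]
  have hint : IntegrableOn (deriv φ) (Ioo a b) :=
    ⟨(measurable_deriv φ).aestronglyMeasurable, by
      simpa only [hasFiniteIntegral_iff_norm, Real.norm_eq_abs] using lt_top_iff_ne_top.2 hfin⟩
  rw [← intervalIntegral.integral_eq_sub_of_hasDerivAt_of_le hab hc
    (fun x hx => (hd x hx).hasDerivAt)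
    ((intervalIntegrable_iff_integrableOn_Ioo_of_le hab).2 hint),
    ← ofReal_integral_eq_lintegral_ofReal hint.abs (.of_forall fun x => abs_nonneg _)]
  refine ENNReal.ofReal_le_ofReal ((intervalIntegral.abs_integral_le_integral_abs hab).trans_eq ?_)
  rw [intervalIntegral.integral_of_le hab, setIntegral_congr_set Ioo_ae_eq_Ioc]

theorem ofReal_sq_sub_div_log_le_lintegral_mul_sq_deriv {φ : ℝ → ℝ} {a b : ℝ} (ha : 0 < a)
    (hab : a < b) (hc : ContinuousOn φ (Icc a b)) (hd : ∀ x ∈ Ioo a b, DifferentiableAt ℝ φ x) :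
    ENNReal.ofReal ((φ b - φ a) ^ 2 / log (b / a)) ≤
      ∫⁻ x in Ioo a b, ENNReal.ofReal (x * deriv φ x ^ 2) := by
  rw [ENNReal.ofReal_div_of_pos (log_pos ((one_lt_div ha).2 hab))]
  refine ENNReal.div_le_of_le_mul ?_
  calc ENNReal.ofReal ((φ b - φ a) ^ 2)
      = ENNReal.ofReal |φ b - φ a| ^ 2 := by rw [← ENNReal.ofReal_pow (abs_nonneg _), sq_abs]
    _ ≤ (∫⁻ x in Ioo a b, ENNReal.ofReal |deriv φ x|) ^ 2 := by
        gcongr; exact ofReal_abs_sub_le_lintegral_abs_deriv hab.le hc hd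
    _ ≤ _ := sq_lintegral_abs_le_lintegral_mul_sq_mul_log (measurable_deriv φ) ha hab.le

def annulus (r R : ℝ) : Set ℂ := {z : ℂ | r < ‖z‖ ∧ ‖z‖ < R}

theorem isOpen_annulus (r R : ℝ) : IsOpen (annulus r R) :=
  (isOpen_lt continuous_const continuous_norm).inter (isOpen_lt continuous_norm continuous_const)

theorem norm_ofReal_mul_of_norm_eq_one {ρ : ℝ} {e : ℂ} (he : ‖e‖ = 1) (hρ : 0 ≤ ρ) :
    ‖(ρ : ℂ) * e‖ = ρ := by
  rw [norm_mul, he, mul_one, Complex.norm_real, norm_of_nonneg hρ]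

theorem ofReal_mul_mem_annulus {r R ρ : ℝ} {e : ℂ} (he : ‖e‖ = 1) (hρ : ρ ∈ Ioo r R)
    (hr : 0 ≤ r) : (ρ : ℂ) * e ∈ annulus r R := by
  change r < _ ∧ _ < R
  rwa [norm_ofReal_mul_of_norm_eq_one he (hr.trans hρ.1.le)]

theorem ofReal_sq_sub_div_log_le_lintegral_along_ray {r R : ℝ} (hr : 0 < r) (hrR : r < R)
    {v : ℂ → ℝ} (hc : ContinuousOn v {z : ℂ | r ≤ ‖z‖ ∧ ‖z‖ ≤ R}) (hd : DifferentiableOn ℝ v (annulus r R))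
    {e : ℂ} (he : ‖e‖ = 1) :
    ENNReal.ofReal ((v (R * e) - v (r * e)) ^ 2 / log (R / r)) ≤
      ∫⁻ ρ in Ioo r R, ENNReal.ofReal ρ * ENNReal.ofReal (‖fderiv ℝ v (ρ * e)‖ ^ 2) := by
  have hray (ρ : ℝ) : HasDerivAt (fun ρ : ℝ => (ρ : ℂ) * e) e ρ := by
    simpa using (Complex.ofRealCLM.hasDerivAt (x := ρ)).mul_const e
  have hderiv : ∀ ρ ∈ Ioo r R,
      HasDerivAt (fun ρ : ℝ => v (ρ * e)) (fderiv ℝ v (ρ * e) e) ρ := by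
    intro ρ hρ
    exact (hd.differentiableAt ((isOpen_annulus r R).mem_nhds
        (ofReal_mul_mem_annulus he hρ hr.le))).hasFDerivAt.comp_hasDerivAt ρ (hray ρ)
  refine (ofReal_sq_sub_div_log_le_lintegral_mul_sq_deriv hr hrR ?_
    fun ρ hρ => (hderiv ρ hρ).differentiableAt).trans
    (setLIntegral_mono' measurableSet_Ioo fun ρ hρ => ?_)
  · refine hc.comp (by fun_prop) fun ρ hρ => ?_
    change r ≤ _ ∧ _ ≤ R
    rwa [norm_ofReal_mul_of_norm_eq_one he (hr.le.trans hρ.1)]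
  · rw [(hderiv ρ hρ).deriv, ← ENNReal.ofReal_mul (hr.trans hρ.1).le]
    refine ENNReal.ofReal_le_ofReal (mul_le_mul_of_nonneg_left ?_ (hr.trans hρ.1).le)
    rw [← sq_abs]
    gcongr
    simpa [he] using (fderiv ℝ v (ρ * e)).le_opNorm e

theorem lintegral_annulus_eq_lintegral_polar {r R : ℝ} (hr : 0 ≤ r) {F : ℂ → ℝ≥0∞}
    (hF : Measurable F) :
    ∫⁻ z in annulus r R, F z =
      ∫⁻ θ in Ioo (-π) π, ∫⁻ ρ in Ioo r R,
        ENNReal.ofReal ρ * F (ρ * Complex.exp (θ * Complex.I)) := by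
  have hA : MeasurableSet (annulus r R) := (isOpen_annulus r R).measurableSet
  have hpolar (p : ℝ × ℝ) : Complex.polarCoord.symm p = p.1 * Complex.exp (p.2 * Complex.I) := by
    simp [Complex.exp_mul_I, ← Complex.ofReal_cos, ← Complex.ofReal_sin]
  rw [← lintegral_indicator hA, ← Complex.lintegral_comp_polarCoord_symm,
    polarCoord_target, Measure.volume_eq_prod, ← Measure.prod_restrict,
    lintegral_prod_symm' _ (by simp only [hpolar]; fun_prop)]
  refine setLIntegral_congr_fun measurableSet_Ioo fun θ _ => ?_
  rw [← inter_eq_left.2 (Ioo_subset_Ioi_self.trans (Ioi_subset_Ioi hr)),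
    ← Measure.restrict_restrict measurableSet_Ioo, ← lintegral_indicator measurableSet_Ioo]
  refine setLIntegral_congr_fun measurableSet_Ioi fun ρ hρ => ?_
  have hmem : (ρ : ℂ) * Complex.exp (θ * Complex.I) ∈ annulus r R ↔ ρ ∈ Ioo r R := by
    simp only [annulus, mem_ofPred_eq, mem_Ioo,
      norm_ofReal_mul_of_norm_eq_one (Complex.norm_exp_ofReal_mul_I θ) (le_of_lt hρ)]
  simp only [indicator, hpolar, hmem, smul_eq_mul, mul_ite, mul_zero]

/-- extremality of the logarithmic potential: For `0 < r < R`, if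
`v : ℂ → ℝ` is continuous on the closed annulus `{r ≤ |z| ≤ R}`, continuously
differentiable on the open annulus `A(r,R)`, with `v = −1` on `{|z| = r}` and
`v = +1` on `{|z| = R}`, then the Dirichlet energy of `v` on `A(r,R)` is at least
`8π/log(R/r)`.  (The energy is taken as a lower Lebesgue integral so that the
statement is meaningful also when the energy is infinite.) -/
theorem stmt_4 (r R : ℝ) (hr : 0 < r) (hrR : r < R) (v : ℂ → ℝ)
    (hc : ContinuousOn v {z : ℂ | r ≤ ‖z‖ ∧ ‖z‖ ≤ R})
    (hd : ContDiffOn ℝ 1 v {z : ℂ | r < ‖z‖ ∧ ‖z‖ < R})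
    (hbr : ∀ z : ℂ, ‖z‖ = r → v z = -1)
    (hbR : ∀ z : ℂ, ‖z‖ = R → v z = 1) :
    ENNReal.ofReal (8 * Real.pi / Real.log (R / r)) ≤
      ∫⁻ z in {z : ℂ | r < ‖z‖ ∧ ‖z‖ < R},
        ENNReal.ofReal (‖fderiv ℝ v z‖ ^ 2) := by
  have hray (θ : ℝ) := ofReal_sq_sub_div_log_le_lintegral_along_ray hr hrR hc
    (hd.differentiableOn one_ne_zero) (Complex.norm_exp_ofReal_mul_I θ)
  have hnorm (ρ θ : ℝ) (hρ : 0 ≤ ρ) : ‖(ρ : ℂ) * Complex.exp (θ * Complex.I)‖ = ρ :=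
    norm_ofReal_mul_of_norm_eq_one (Complex.norm_exp_ofReal_mul_I θ) hρ
  simp only [hbr _ (hnorm r _ hr.le), hbR _ (hnorm R _ (hr.trans hrR).le)] at hray
  calc ENNReal.ofReal (8 * π / log (R / r))
      = ∫⁻ θ in Ioo (-π) π, ENNReal.ofReal ((1 - -1) ^ 2 / log (R / r)) := by
        rw [setLIntegral_const, Real.volume_Ioo, ← ENNReal.ofReal_mul (div_nonneg (by norm_num)
          (log_nonneg ((one_le_div hr).2 hrR.le)))]
        congr 1; ring
    _ ≤ _ := lintegral_mono hray
    _ = _ := (lintegral_annulus_eq_lintegral_polar hr.le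
      ((measurable_fderiv ℝ v).norm.pow_const 2).ennreal_ofReal).symm
end

section
/- For every ℓ > 0, arccos(tanh(ℓ/2)) · √(e^ℓ + 1) ≥ 2. (Consequently, since β₀ = 2.4984... < 2.4985 and 4·2.4985/5 < 2, one has 1 + 4β₀ℓ/(π·arccos(tanh(ℓ/2))) ≤ 1 + (5ℓ/π)·√(e^ℓ + 1), which is the clean estimate in the Remark following Theorem 3.) -/
/-- For every `ℓ > 0`, `arccos(tanh(ℓ/2))·√(e^ℓ + 1) ≥ 2`.
Consequently, since `β₀ = 2.4984... ≤ 2.4985` and `4·2.4985/5 < 2`, one gets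
`1 + 4β₀ℓ/(π·arccos(tanh(ℓ/2))) ≤ 1 + (5ℓ/π)·√(e^ℓ + 1)`, the clean estimate
in the Remark following Theorem 3. -/
theorem stmt_10 (l : ℝ) (hl : 0 < l) :
    2 ≤ Real.arccos (Real.tanh (l / 2)) * Real.sqrt (Real.exp l + 1) ∧
    ∀ β₀ : ℝ, 0 < β₀ → β₀ ≤ 2.4985 →
      1 + 4 * β₀ * l / (Real.pi * Real.arccos (Real.tanh (l / 2))) ≤
        1 + (5 * l / Real.pi) * Real.sqrt (Real.exp l + 1) := by
  set t := Real.tanh (l / 2) with ht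
  set a := Real.arccos t with ha
  have he : Real.exp (l / 2) > 0 := Real.exp_pos _
  have hE : Real.exp l = Real.exp (l / 2) * Real.exp (l / 2) := by
    rw [← Real.exp_add]; ring_nf
  -- tanh formula
  have htval : t = (Real.exp l - 1) / (Real.exp l + 1) := by
    rw [ht, Real.tanh_eq_sinh_div_cosh, Real.sinh_eq, Real.cosh_eq]
    rw [Real.exp_neg]
    have h1 : Real.exp (l / 2) ≠ 0 := ne_of_gt he
    have h2 : Real.exp l + 1 > 0 := by positivity
    field_simp
    nlinarith [hE]
  have ht1 : t < 1 := by
    rw [htval]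
    rw [div_lt_one (by positivity)]
    linarith
  have htm1 : -1 ≤ t := by
    rw [htval]
    rw [le_div_iff₀ (by positivity)]
    nlinarith [Real.exp_pos l]
  have hcos : Real.cos a = t := Real.cos_arccos htm1 (le_of_lt ht1)
  have hapos : 0 < a := Real.arccos_pos.mpr ht1
  have hbound : 1 - a ^ 2 / 2 ≤ t := hcos ▸ Real.one_sub_sq_div_two_le_cos
  -- so a^2 ≥ 2(1-t) = 4/(e^l+1)
  have hEpos : (0:ℝ) < Real.exp l + 1 := by positivity
  have hkey : a ^ 2 * (Real.exp l + 1) ≥ 4 := by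
    have h2 : 2 * (1 - t) = 4 / (Real.exp l + 1) := by
      rw [htval]; field_simp; ring
    have : a ^ 2 ≥ 4 / (Real.exp l + 1) := by
      rw [← h2]; linarith
    calc a ^ 2 * (Real.exp l + 1) ≥ (4 / (Real.exp l + 1)) * (Real.exp l + 1) := by
          exact mul_le_mul_of_nonneg_right this (le_of_lt hEpos)
      _ = 4 := by field_simp
  have hs : Real.sqrt (Real.exp l + 1) ^ 2 = Real.exp l + 1 := Real.sq_sqrt (le_of_lt hEpos)
  have hspos : 0 < Real.sqrt (Real.exp l + 1) := Real.sqrt_pos.mpr hEpos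
  have hmain : 2 ≤ a * Real.sqrt (Real.exp l + 1) := by
    nlinarith [mul_pos hapos hspos]
  refine ⟨hmain, fun β₀ hβ hβle => ?_⟩
  have hπ : 0 < Real.pi := Real.pi_pos
  rw [add_le_add_iff_left, div_le_iff₀ (by positivity)]
  have h1 : 4 * β₀ * l ≤ 5 * 2 * l := by nlinarith
  have h2 : (5 * 2 : ℝ) * l ≤ 5 * (a * Real.sqrt (Real.exp l + 1)) * l := by
    nlinarith
  calc 4 * β₀ * l ≤ 5 * (a * Real.sqrt (Real.exp l + 1)) * l := by linarith
    _ = 5 * l / Real.pi * Real.sqrt (Real.exp l + 1) * (Real.pi * a) := by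
        field_simp
end

section
/- The function g(ℓ) = arccos(tanh(ℓ/2))/ℓ is strictly decreasing on (0, ∞); equivalently, ℓ ↦ (π/ℓ)·arccos(tanh(ℓ/2)) is strictly decreasing on (0, ∞). -/
open Real

lemma my_tanh_lt_one (x : ℝ) : Real.tanh x < 1 := by
  rw [Real.tanh_eq_sinh_div_cosh, div_lt_one (Real.cosh_pos x)]
  nlinarith [Real.cosh_sub_sinh x, Real.exp_pos (-x)]

lemma my_neg_one_lt_tanh (x : ℝ) : -1 < Real.tanh x := by
  rw [Real.tanh_eq_sinh_div_cosh, lt_div_iff₀ (Real.cosh_pos x)]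
  nlinarith [Real.cosh_add_sinh x, Real.exp_pos x]

lemma my_tanh_strictMono : StrictMono Real.tanh := by
  intro x y hxy
  rw [Real.tanh_eq_sinh_div_cosh, Real.tanh_eq_sinh_div_cosh,
    div_lt_div_iff₀ (Real.cosh_pos _) (Real.cosh_pos _)]
  have h : 0 < Real.sinh (y - x) := by
    rw [Real.sinh_pos_iff]; linarith
  rw [Real.sinh_sub] at h
  linarith

lemma my_f_pos {x : ℝ} : 0 < Real.arccos (Real.tanh (x / 2)) :=
  Real.arccos_pos.2 (my_tanh_lt_one _)

lemma my_f_anti : StrictAntiOn (fun l : ℝ => Real.arccos (Real.tanh (l / 2))) (Set.Ioi 0) := by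
  intro x _ y _ hxy
  have h1 : Real.tanh (x / 2) < Real.tanh (y / 2) := my_tanh_strictMono (by linarith)
  exact Real.strictAntiOn_arccos
    ⟨by linarith [my_neg_one_lt_tanh (x/2)], (my_tanh_lt_one _).le⟩
    ⟨by linarith [my_neg_one_lt_tanh (y/2)], (my_tanh_lt_one _).le⟩ h1

/-- `g(ℓ) = arccos(tanh(ℓ/2))/ℓ` is strictly decreasing on `(0,∞)`;
equivalently `ℓ ↦ (π/ℓ)·arccos(tanh(ℓ/2))` is strictly decreasing on `(0,∞)`. -/
theorem stmt_11 :
    StrictAntiOn (fun l : ℝ => Real.arccos (Real.tanh (l / 2)) / l) (Set.Ioi 0) ∧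
    StrictAntiOn (fun l : ℝ => (Real.pi / l) * Real.arccos (Real.tanh (l / 2)))
      (Set.Ioi 0) := by
  have hg : StrictAntiOn (fun l : ℝ => Real.arccos (Real.tanh (l / 2)) / l) (Set.Ioi 0) := by
    intro x hx y hy hxy
    have hx0 : (0:ℝ) < x := hx
    have hy0 : (0:ℝ) < y := hy
    have hf : Real.arccos (Real.tanh (y / 2)) < Real.arccos (Real.tanh (x / 2)) :=
      my_f_anti hx hy hxy
    have := my_f_pos (x := y)
    calc Real.arccos (Real.tanh (y / 2)) / y
        < Real.arccos (Real.tanh (x / 2)) / y := by gcongr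
      _ ≤ Real.arccos (Real.tanh (x / 2)) / x := by
          gcongr
          exact (my_f_pos (x := x)).le
  refine ⟨hg, ?_⟩
  intro x hx y hy hxy
  have h := hg hx hy hxy
  have hx0 : (0:ℝ) < x := hx
  have hy0 : (0:ℝ) < y := hy
  simp only [div_mul_eq_mul_div, mul_div_assoc]
  exact mul_lt_mul_of_pos_left h Real.pi_pos
end

section
/- The function g(ℓ) = arccos(tanh(ℓ/2))/ℓ is convex on (0, ∞); equivalently, ℓ ↦ (π/ℓ)·arccos(tanh(ℓ/2)) is convex on (0, ∞). -/
/-!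
Put `f ℓ = arccos (tanh (ℓ / 2))`. Its derivative `-1 / (2 cosh (ℓ / 2))` is increasing on
`[0, ∞)`, so `f` is convex there; it is also nonnegative and decreasing. On `(0, ∞)` the function
`ℓ ↦ 1 / ℓ` is convex, positive and decreasing as well, and the product of two nonnegative convex
functions that vary in the same direction is convex.
-/

open Real Set

namespace Real

theorem hasDerivAt_tanh (x : ℝ) : HasDerivAt tanh (cosh x ^ 2)⁻¹ x := by
  have h := (hasDerivAt_sinh x).div (hasDerivAt_cosh x) (cosh_pos x).ne'
  rw [show sinh / cosh = tanh from funext fun y ↦ (tanh_eq_sinh_div_cosh y).symm] at h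
  refine h.congr_deriv ?_
  field_simp
  linarith [cosh_sq_sub_sinh_sq x]

theorem hasDerivAt_arccos_tanh (x : ℝ) :
    HasDerivAt (fun t ↦ arccos (tanh t)) (-(cosh x)⁻¹) x := by
  refine ((hasDerivAt_arccos (neg_one_lt_tanh x).ne' (tanh_lt_one x).ne).comp x
    (hasDerivAt_tanh x)).congr_deriv ?_
  have h : 1 - tanh x ^ 2 = (cosh x ^ 2)⁻¹ := by
    rw [tanh_eq_sinh_div_cosh]
    field_simp
    linarith [cosh_sq_sub_sinh_sq x]
  rw [h, sqrt_inv, sqrt_sq (cosh_pos x).le]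
  field_simp

theorem antitone_arccos_tanh : Antitone fun t ↦ arccos (tanh t) :=
  antitone_of_deriv_nonpos (fun x ↦ (hasDerivAt_arccos_tanh x).differentiableAt) fun x ↦ by
    rw [(hasDerivAt_arccos_tanh x).deriv, neg_nonpos]
    exact inv_nonneg.2 (cosh_pos x).le

theorem convexOn_arccos_tanh : ConvexOn ℝ (Ici 0) fun t ↦ arccos (tanh t) := by
  refine MonotoneOn.convexOn_of_deriv (convex_Ici 0)
    (fun x _ ↦ (hasDerivAt_arccos_tanh x).continuousAt.continuousWithinAt)
    (fun x _ ↦ (hasDerivAt_arccos_tanh x).differentiableAt.differentiableWithinAt) ?_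
  rw [interior_Ici]
  intro x hx y hy hxy
  simp only [(hasDerivAt_arccos_tanh _).deriv, neg_le_neg_iff]
  rw [mem_Ioi] at hx hy
  gcongr
  rw [cosh_le_cosh, abs_of_pos hx, abs_of_pos hy]
  exact hxy

theorem convexOn_arccos_tanh_half : ConvexOn ℝ (Ici 0) fun l ↦ arccos (tanh (l / 2)) := by
  have h := convexOn_arccos_tanh.comp_linearMap ((2 : ℝ)⁻¹ • LinearMap.id)
  have hs : ((2 : ℝ)⁻¹ • LinearMap.id : ℝ →ₗ[ℝ] ℝ) ⁻¹' Ici 0 = Ici 0 := by ext; simp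
  rw [hs] at h
  exact h.congr fun l _ ↦ by simp [div_eq_inv_mul]

end Real

theorem ConvexOn.div_id_of_antitoneOn {f : ℝ → ℝ} (hf : ConvexOn ℝ (Ioi 0) f)
    (hf₀ : ∀ x ∈ Ioi (0 : ℝ), 0 ≤ f x) (hf_anti : AntitoneOn f (Ioi 0)) :
    ConvexOn ℝ (Ioi 0) fun x ↦ f x / x := by
  have hinv : ConvexOn ℝ (Ioi 0) fun x : ℝ ↦ x⁻¹ := by
    simpa only [zpow_neg_one] using convexOn_zpow (𝕜 := ℝ) (-1)
  have hfg : (fun x ↦ f x / x) = f * fun x ↦ x⁻¹ := by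
    ext x
    simp [div_eq_mul_inv]
  rw [hfg]
  exact hf.mul hinv hf₀ (fun x hx ↦ inv_nonneg.2 (le_of_lt hx))
    (hf_anti.monovaryOn antitoneOn_inv_pos)

/-- `g(ℓ) = arccos(tanh(ℓ/2))/ℓ` is convex on `(0,∞)`; equivalently
`ℓ ↦ (π/ℓ)·arccos(tanh(ℓ/2))` is convex on `(0,∞)`. -/
theorem stmt_12 :
    ConvexOn ℝ (Set.Ioi 0) (fun l : ℝ => Real.arccos (Real.tanh (l / 2)) / l) ∧
    ConvexOn ℝ (Set.Ioi 0)
      (fun l : ℝ => (Real.pi / l) * Real.arccos (Real.tanh (l / 2))) := by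
  have h : ConvexOn ℝ (Ioi 0) fun l : ℝ ↦ arccos (tanh (l / 2)) / l :=
    (convexOn_arccos_tanh_half.subset Ioi_subset_Ici_self (convex_Ioi 0)).div_id_of_antitoneOn
      (fun _ _ ↦ arccos_nonneg _) fun _ _ _ _ hxy ↦ antitone_arccos_tanh (by linarith)
  refine ⟨h, ?_⟩
  have hπ : (fun l : ℝ ↦ π / l * arccos (tanh (l / 2))) =
      π • fun l ↦ arccos (tanh (l / 2)) / l := by
    ext l
    simp only [Pi.smul_apply, smul_eq_mul]
    ring
  rw [hπ]
  exact h.smul pi_pos.le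
end
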